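/- Let α ∈ (0,1), ω ∈ (0,∞), X a real Banach space, u₀ ∈ X, and let u : [0,ω) → X be continuous with u(t) = u₀ + (1/Γ(α)) ∫_0^t (t−s)^{α−1} g(s) ds for all t ∈ [0,ω), where g : [0,ω) → X is continuous and bounded. Then the limit u_ω := lim_{t→ω⁻} u(t) exists in X, and the extension of u to [0,ω] by u(ω) := u_ω is continuous and satisfies u(ω) = u₀ + (1/Γ(α)) ∫_0^ω (ω−s)^{α−1} g(s) ds. -/

import Mathlib

/-!
Write `F t = ∫₀ᵗ (t - r)^(α-1) g r dr`, so that `u = u₀ + Γ(α)⁻¹ F` on `[0, ω)`. For `t < ω` split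
`F ω - F t` into `∫ₜ^ω (ω - r)^(α-1) g r dr` and `∫₀ᵗ ((ω - r)^(α-1) - (t - r)^(α-1)) g r dr`.
Since `α ≤ 1` the kernel `s ↦ s^(α-1)` is antitone, so both kernels are of one sign and, with
`‖g‖ ≤ M`, each piece is bounded by `M (ω - t)^α / α`. Hence `F t → F ω` as `t → ω⁻`, and
`u(ω) := u₀ + Γ(α)⁻¹ F ω` is the continuous extension.
-/

open Set MeasureTheory Filter Topology intervalIntegral

section Kernel

variable {α : ℝ}

theorem intervalIntegrable_sub_rpow (hα : 0 < α) (d a b : ℝ) :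
    IntervalIntegrable (fun r => (d - r) ^ (α - 1)) volume a b := by
  simpa using (intervalIntegrable_rpow' (r := α - 1) (a := d - a) (b := d - b)
    (by linarith)).comp_sub_left d

theorem integral_sub_rpow (hα : 0 < α) (d a b : ℝ) :
    ∫ r in a..b, (d - r) ^ (α - 1) = ((d - a) ^ α - (d - b) ^ α) / α := by
  rw [integral_comp_sub_left (fun x => x ^ (α - 1)) d, integral_rpow (Or.inl (by linarith)),
    sub_add_cancel]

end Kernel

section BoundedSmul

variable {E : Type*} [NormedAddCommGroup E] [NormedSpace ℝ E]
  {φ : ℝ → ℝ} {g : ℝ → E} {a b M : ℝ}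

theorem IntervalIntegrable.smul_of_norm_le (hab : a ≤ b) (hφ : IntervalIntegrable φ volume a b)
    (hg : AEStronglyMeasurable g (volume.restrict (Ioo a b)))
    (hM : ∀ r ∈ Ioo a b, ‖g r‖ ≤ M) :
    IntervalIntegrable (fun r => φ r • g r) volume a b := by
  rw [intervalIntegrable_iff_integrableOn_Ioo_of_le hab] at hφ ⊢
  exact hφ.smul_bdd M hg (ae_restrict_of_forall_mem measurableSet_Ioo hM)

theorem norm_integral_smul_le_of_norm_le (hab : a ≤ b) (hφ : IntervalIntegrable φ volume a b)
    (hφ_nonneg : ∀ r ∈ Ioo a b, 0 ≤ φ r) (hM : ∀ r ∈ Ioo a b, ‖g r‖ ≤ M) :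
    ‖∫ r in a..b, φ r • g r‖ ≤ M * ∫ r in a..b, φ r := by
  rw [← intervalIntegral.integral_const_mul]
  refine norm_integral_le_of_norm_le hab ?_ (hφ.const_mul M)
  filter_upwards [Measure.ae_ne volume b] with r hrb hr
  have hr' : r ∈ Ioo a b := ⟨hr.1, lt_of_le_of_ne hr.2 hrb⟩
  rw [norm_smul, Real.norm_of_nonneg (hφ_nonneg r hr'), mul_comm]
  exact mul_le_mul_of_nonneg_right (hM r hr') (hφ_nonneg r hr')

end BoundedSmul

section RiemannLiouville

variable {E : Type*} [NormedAddCommGroup E] [NormedSpace ℝ E]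
  {α ω M : ℝ} {g : ℝ → E}

/-- The Riemann–Liouville integral of order `α`, without the factor `1 / Γ(α)`. -/
noncomputable def riemannLiouville (α : ℝ) (g : ℝ → E) (t : ℝ) : E :=
  ∫ r in (0 : ℝ)..t, (t - r) ^ (α - 1) • g r

variable (hα : 0 < α) (hg : AEStronglyMeasurable g (volume.restrict (Ioo 0 ω)))
  (hM : ∀ r ∈ Ioo 0 ω, ‖g r‖ ≤ M)
include hα hg hM

theorem norm_riemannLiouville_sub_le (hα₁ : α ≤ 1) {t : ℝ} (ht₀ : 0 ≤ t) (htω : t ≤ ω) :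
    ‖riemannLiouville α g ω - riemannLiouville α g t‖ ≤ 2 * M * (ω - t) ^ α / α := by
  obtain rfl | htω := htω.eq_or_lt
  · simp [Real.zero_rpow hα.ne']
  have hM₀ : 0 ≤ M := (norm_nonneg _).trans (hM (ω / 2) ⟨by linarith, by linarith⟩)
  have integrable {d a b : ℝ} (ha : 0 ≤ a) (hab : a ≤ b) (hb : b ≤ ω) :
      IntervalIntegrable (fun r => (d - r) ^ (α - 1) • g r) volume a b :=
    (intervalIntegrable_sub_rpow hα d a b).smul_of_norm_le hab
      (hg.mono_measure (Measure.restrict_mono (Ioo_subset_Ioo ha hb) le_rfl))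
      fun r hr => hM r ⟨ha.trans_lt hr.1, hr.2.trans_le hb⟩
  have split : riemannLiouville α g ω - riemannLiouville α g t =
      (∫ r in t..ω, (ω - r) ^ (α - 1) • g r) -
        ∫ r in (0 : ℝ)..t, ((t - r) ^ (α - 1) - (ω - r) ^ (α - 1)) • g r := by
    simp only [riemannLiouville, sub_smul]
    rw [← integral_add_adjacent_intervals (integrable le_rfl ht₀ htω.le)
      (integrable ht₀ htω.le le_rfl), integral_sub (integrable le_rfl ht₀ htω.le)
      (integrable le_rfl ht₀ htω.le)]
    abel
  have tail : ‖∫ r in t..ω, (ω - r) ^ (α - 1) • g r‖ ≤ M * (ω - t) ^ α / α := by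
    refine (norm_integral_smul_le_of_norm_le htω.le (intervalIntegrable_sub_rpow hα ω t ω)
      (fun r hr => Real.rpow_nonneg (by linarith [hr.2]) _)
      fun r hr => hM r ⟨ht₀.trans_lt hr.1, hr.2⟩).trans_eq ?_
    rw [integral_sub_rpow hα, sub_self, Real.zero_rpow hα.ne', sub_zero, mul_div_assoc]
  have head : ‖∫ r in (0 : ℝ)..t, ((t - r) ^ (α - 1) - (ω - r) ^ (α - 1)) • g r‖ ≤
      M * (ω - t) ^ α / α := by
    refine (norm_integral_smul_le_of_norm_le ht₀
      ((intervalIntegrable_sub_rpow hα t 0 t).sub (intervalIntegrable_sub_rpow hα ω 0 t))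
      (fun r hr => sub_nonneg.2 <| Real.rpow_le_rpow_of_nonpos (by linarith [hr.2])
        (by linarith) (by linarith))
      fun r hr => hM r ⟨hr.1, hr.2.trans htω⟩).trans ?_
    rw [integral_sub (intervalIntegrable_sub_rpow hα t 0 t)
      (intervalIntegrable_sub_rpow hα ω 0 t), integral_sub_rpow hα, integral_sub_rpow hα,
      sub_self, Real.zero_rpow hα.ne', sub_zero, sub_zero, mul_div_assoc, div_sub_div_same]
    have : t ^ α ≤ ω ^ α := Real.rpow_le_rpow ht₀ htω.le hα.le
    gcongr
    rw [sub_zero]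
    linarith
  rw [split]
  exact (norm_sub_le _ _).trans ((add_le_add tail head).trans_eq (by ring))

theorem tendsto_riemannLiouville_nhdsLT (hα₁ : α ≤ 1) (hω : 0 < ω) :
    Tendsto (riemannLiouville α g) (𝓝[<] ω) (𝓝 (riemannLiouville α g ω)) := by
  have hbound : Tendsto (fun t => 2 * M * (ω - t) ^ α / α) (𝓝[<] ω) (𝓝 0) := by
    have h : Tendsto (fun t : ℝ => (ω - t) ^ α) (𝓝 ω) (𝓝 0) :=
      ((continuous_const.sub continuous_id).rpow_const fun _ => Or.inr hα.le).tendsto' ω 0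
        (by simp [Real.zero_rpow hα.ne'])
    simpa using ((h.mono_left nhdsWithin_le_nhds).const_mul (2 * M)).div_const α
  rw [tendsto_iff_norm_sub_tendsto_zero]
  refine squeeze_zero' (Eventually.of_forall fun _ => norm_nonneg _) ?_ hbound
  filter_upwards [Ico_mem_nhdsLT hω] with t ht
  rw [norm_sub_rev]
  exact norm_riemannLiouville_sub_le hα hg hM hα₁ ht.1 ht.2.le

end RiemannLiouville

theorem ContinuousOn.Icc_update_of_tendsto {α β : Type*} [TopologicalSpace α] [LinearOrder α]
    [OrderTopology α] [TopologicalSpace β] [DecidableEq α] {f : α → β} {a b : α} {y : β}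
    (hf : ContinuousOn f (Ico a b)) (hb : Tendsto f (𝓝[<] b) (𝓝 y)) :
    ContinuousOn (Function.update f b y) (Icc a b) := by
  intro x hx
  obtain rfl | hxb := hx.2.eq_or_lt
  · rw [continuousWithinAt_update_same]
    exact hb.mono_left (nhdsWithin_mono _ fun z hz => lt_of_le_of_ne hz.1.2 hz.2)
  · have hIco : Ico a b ∈ 𝓝[Icc a b] x :=
      mem_nhdsWithin.2 ⟨Iio b, isOpen_Iio, hxb, fun z hz => ⟨hz.2.1, hz.1⟩⟩
    exact ((hf x ⟨hx.1, hxb⟩).congr (fun z hz => Function.update_of_ne hz.2.ne ..)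
      (Function.update_of_ne hxb.ne ..)).mono_of_mem_nhdsWithin hIco

theorem fractional_extension_to_endpoint_general
    (α ω : ℝ) (hα : α ∈ Set.Ioo (0 : ℝ) 1) (hω : 0 < ω)
    (X : Type*) [NormedAddCommGroup X] [NormedSpace ℝ X]
    (u₀ : X) (u g : ℝ → X)
    (hu_cont : ContinuousOn u (Set.Ico 0 ω))
    (hg_cont : ContinuousOn g (Set.Ico 0 ω))
    (hg_bdd : ∃ M : ℝ, ∀ s ∈ Set.Ico (0 : ℝ) ω, ‖g s‖ ≤ M)
    (hu : ∀ s ∈ Set.Ico (0 : ℝ) ω,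
      u s = u₀ + (1 / Real.Gamma α) •
        ∫ r in (0 : ℝ)..s, ((s - r) ^ (α - 1)) • g r) :
    ∃ uω : X,
      Filter.Tendsto u (nhdsWithin ω (Set.Iio ω)) (nhds uω) ∧
      ContinuousOn (Function.update u ω uω) (Set.Icc 0 ω) ∧
      uω = u₀ + (1 / Real.Gamma α) •
        ∫ r in (0 : ℝ)..ω, ((ω - r) ^ (α - 1)) • g r := by
  obtain ⟨M, hM⟩ := hg_bdd
  have hlim : Tendsto u (𝓝[<] ω) (𝓝 (u₀ + (1 / Real.Gamma α) • riemannLiouville α g ω)) := by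
    refine (((tendsto_riemannLiouville_nhdsLT hα.1
      ((hg_cont.mono Ioo_subset_Ico_self).aestronglyMeasurable measurableSet_Ioo)
      (fun r hr => hM r (Ioo_subset_Ico_self hr)) hα.2.le hω).const_smul _).const_add u₀).congr' ?_
    filter_upwards [Ico_mem_nhdsLT hω] with t ht
    exact (hu t ht).symm
  exact ⟨_, hlim, hu_cont.Icc_update_of_tendsto hlim, rfl⟩

/-- Continuation at the endpoint: if `u(t) = u₀ + (1/Γ(α)) ∫_0^t (t-s)^{α-1} g(s) ds`
on `[0,ω)` with `g` continuous and bounded, then `u(t)` has a limit `u_ω` as `t → ω⁻`,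
the extension of `u` to `[0,ω]` by `u(ω) := u_ω` is continuous, and
`u_ω = u₀ + (1/Γ(α)) ∫_0^ω (ω-s)^{α-1} g(s) ds`. -/
theorem fractional_extension_to_endpoint
    (α ω : ℝ) (hα : α ∈ Set.Ioo (0 : ℝ) 1) (hω : 0 < ω)
    (X : Type*) [NormedAddCommGroup X] [NormedSpace ℝ X] [CompleteSpace X]
    (u₀ : X) (u g : ℝ → X)
    (hu_cont : ContinuousOn u (Set.Ico 0 ω))
    (hg_cont : ContinuousOn g (Set.Ico 0 ω))
    (hg_bdd : ∃ M : ℝ, ∀ s ∈ Set.Ico (0 : ℝ) ω, ‖g s‖ ≤ M)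
    (hu : ∀ s ∈ Set.Ico (0 : ℝ) ω,
      u s = u₀ + (1 / Real.Gamma α) •
        ∫ r in (0 : ℝ)..s, ((s - r) ^ (α - 1)) • g r) :
    ∃ uω : X,
      Filter.Tendsto u (nhdsWithin ω (Set.Iio ω)) (nhds uω) ∧
      ContinuousOn (Function.update u ω uω) (Set.Icc 0 ω) ∧
      uω = u₀ + (1 / Real.Gamma α) •
        ∫ r in (0 : ℝ)..ω, ((ω - r) ^ (α - 1)) • g r :=
  fractional_extension_to_endpoint_general α ω hα hω X u₀ u g hu_cont hg_cont hg_bdd hu
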